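/- Combining the previous facts: let Ψ be doubly stochastic with Ψ^τ → (1/n)𝟙𝟙^T, let P ⊆ {1,...,n} be nonempty, C > 0, Y_i[0] = C·[i ∈ P], y_i[0] = C x_i·[i ∈ P]. Then for each agent i, lim_{τ→∞} Y_i[τ]^{-1} y_i[τ] = (1/|P|) ∑_{j∈P} x_j, where Y[τ] = Ψ^τ Y[0] and y[τ] = Ψ^τ y[0]. -/

import Mathlib

open Matrix Filter Topology

/-!
Ψ^τ converges to the averaging matrix, so each agent's entry of Ψ^τ v tends to
n⁻¹ ∑ v: both the information quantity and the information state converge to their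
network averages. Their ratio therefore converges to (∑ y[0]) / (∑ Y[0]), the common factor
n⁻¹ cancelling, and the initialization makes this the average of x over P.
-/

theorem Matrix.of_const_mulVec {m n α : Type*} [Fintype n] [NonUnitalNonAssocSemiring α]
    (c : α) (v : n → α) :
    (of fun (_ : m) (_ : n) => c) *ᵥ v = fun _ => c * ∑ j, v j := by
  ext
  simp [mulVec, dotProduct, Finset.mul_sum]

section Consensus

variable {ι m n 𝕜 : Type*} [Fintype n] [NormedField 𝕜] {l : Filter ι}
  {A : ι → Matrix m n 𝕜} {c : 𝕜}

theorem tendsto_mulVec_apply_of_tendsto_const_matrix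
    (hA : Tendsto A l (𝓝 (of fun _ _ => c))) (v : n → 𝕜) (i : m) :
    Tendsto (fun t => (A t *ᵥ v) i) l (𝓝 (c * ∑ j, v j)) := by
  have hv : Tendsto (fun t => A t *ᵥ v) l (𝓝 ((of fun (_ : m) (_ : n) => c) *ᵥ v)) :=
    ((continuous_id.matrix_mulVec continuous_const).tendsto _).comp hA
  rw [of_const_mulVec] at hv
  exact tendsto_pi_nhds.mp hv i

theorem tendsto_inv_mul_mulVec_apply_of_tendsto_const_matrix
    (hA : Tendsto A l (𝓝 (of fun _ _ => c))) (hc : c ≠ 0) {Y : n → 𝕜} (hY : ∑ j, Y j ≠ 0)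
    (y : n → 𝕜) (i : m) :
    Tendsto (fun t => ((A t *ᵥ Y) i)⁻¹ * (A t *ᵥ y) i) l (𝓝 ((∑ j, Y j)⁻¹ * ∑ j, y j)) := by
  have hlim := ((tendsto_mulVec_apply_of_tendsto_const_matrix hA Y i).inv₀
    (mul_ne_zero hc hY)).mul (tendsto_mulVec_apply_of_tendsto_const_matrix hA y i)
  convert hlim using 2
  field_simp

end Consensus

theorem bridge_consensus_main_general (n : ℕ) (hn : 0 < n)
    (Ψ : Matrix (Fin n) (Fin n) ℝ)
    (hconv : Tendsto (fun τ : ℕ => Ψ ^ τ) atTop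
      (𝓝 (Matrix.of fun _ _ : Fin n => (n : ℝ)⁻¹)))
    (P : Finset (Fin n)) (hP : P.Nonempty)
    (C : ℝ) (hC : 0 < C) (x : Fin n → ℝ) (Y0 y0 : Fin n → ℝ)
    (hY0 : ∀ i, Y0 i = if i ∈ P then C else 0)
    (hy0 : ∀ i, y0 i = if i ∈ P then C * x i else 0)
    (i : Fin n) :
    Tendsto (fun τ : ℕ => ((Ψ ^ τ).mulVec Y0 i)⁻¹ * (Ψ ^ τ).mulVec y0 i)
      atTop (𝓝 ((P.card : ℝ)⁻¹ * ∑ j ∈ P, x j)) := by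
  have hsumY : ∑ j, Y0 j = C * P.card := by
    simp [hY0, Finset.sum_ite_mem, mul_comm]
  have hsumy : ∑ j, y0 j = C * ∑ j ∈ P, x j := by
    simp [hy0, Finset.sum_ite_mem, Finset.mul_sum]
  have hcard : (P.card : ℝ) ≠ 0 := by exact_mod_cast hP.card_pos.ne'
  have hlim := tendsto_inv_mul_mulVec_apply_of_tendsto_const_matrix hconv
    (inv_ne_zero (Nat.cast_ne_zero.mpr hn.ne')) (hsumY ▸ mul_ne_zero hC.ne' hcard) y0 i
  rw [hsumY, hsumy, mul_inv, mul_mul_mul_comm, inv_mul_cancel₀ hC.ne', one_mul] at hlim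
  exact hlim

theorem bridge_consensus_main (n : ℕ) (hn : 0 < n)
    (Ψ : Matrix (Fin n) (Fin n) ℝ)
    (hnonneg : ∀ i j, 0 ≤ Ψ i j)
    (hrow : ∀ i, ∑ j, Ψ i j = 1) (hcol : ∀ j, ∑ i, Ψ i j = 1)
    (hconv : Tendsto (fun τ : ℕ => Ψ ^ τ) atTop
      (𝓝 (Matrix.of fun _ _ : Fin n => (n : ℝ)⁻¹)))
    (P : Finset (Fin n)) (hP : P.Nonempty)
    (C : ℝ) (hC : 0 < C) (x : Fin n → ℝ) (Y0 y0 : Fin n → ℝ)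
    (hY0 : ∀ i, Y0 i = if i ∈ P then C else 0)
    (hy0 : ∀ i, y0 i = if i ∈ P then C * x i else 0)
    (i : Fin n) :
    Tendsto (fun τ : ℕ => ((Ψ ^ τ).mulVec Y0 i)⁻¹ * (Ψ ^ τ).mulVec y0 i)
      atTop (𝓝 ((P.card : ℝ)⁻¹ * ∑ j ∈ P, x j)) :=
  bridge_consensus_main_general n hn Ψ hconv P hP C hC x Y0 y0 hY0 hy0 i
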